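/- Let A ⊆ ℝ² be a nonempty bounded open set. Then for every x₀ ∈ ℝ² and every r > 0, Q(A; B_r(x₀)) ≥ i(A) − |A|²/(2π) − |M(A)|²/|A|, and equality holds if and only if πr² = |A| and x₀ = M(A)/|A|. In particular, among all balls, Q(A; B_r(x₀)) is minimized by the ball having the same mass and the same center of mass as A. -/

import Mathlib

open MeasureTheory Metric

/-- The plane `ℝ²`. -/
abbrev Plane := EuclideanSpace ℝ (Fin 2)

/-- The mass `|A|` of a set: its two-dimensional Lebesgue measure. -/
noncomputable def mass (A : Set Plane) : ℝ := (volume A).toReal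

/-- The momentum `M(A) = ∫_A x dx`. -/
noncomputable def mom (A : Set Plane) : Plane := ∫ x in A, x

/-- The angular momentum `i(A) = ∫_A |x|² dx`. -/
noncomputable def angMom (A : Set Plane) : ℝ := ∫ x in A, ‖x‖ ^ 2

/-- `Q(A; B_r(x₀)) = ∫_{A △ B_r(x₀)} | |x − x₀|² − r² | dx`. -/
noncomputable def Qfun (A : Set Plane) (x₀ : Plane) (r : ℝ) : ℝ :=
  ∫ x in symmDiff A (ball x₀ r), |‖x - x₀‖ ^ 2 - r ^ 2|


/-! Since `f x = ‖x - x₀‖² - r²` is nonnegative off `B = B_r(x₀)` and nonpositive on it,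
`Q(A; B) = ∫_A f - ∫_B f`. Expanding the square, `∫_A f` is a polynomial in `x₀` and `r`
whose coefficients are `i(A)`, `M(A)`, `|A|`, while `∫_B f = -πr⁴/2`. Completing the squares gives
`Q(A; B) - (i(A) - |A|²/(2π) - |M(A)|²/|A|) = |A| ‖x₀ - M(A)/|A|‖² + (π/2)(r² - |A|/π)²`. -/

open Set Module
open scoped RealInnerProductSpace

theorem Continuous.integrableOn_of_isBounded {X F : Type*} [PseudoMetricSpace X] [ProperSpace X]
    [MeasurableSpace X] [OpensMeasurableSpace X] {μ : Measure X} [IsLocallyFiniteMeasure μ]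
    [NormedAddCommGroup F] {g : X → F} (hg : Continuous g) {s : Set X}
    (hs : Bornology.IsBounded s) : IntegrableOn g s μ :=
  (hg.locallyIntegrable.integrableOn_isCompact hs.isCompact_closure).mono_set subset_closure

theorem setIntegral_symmDiff_abs_eq_sub {α : Type*} [MeasurableSpace α] {μ : Measure α}
    {f : α → ℝ} {s t : Set α} (hs : MeasurableSet s) (ht : MeasurableSet t)
    (hfs : IntegrableOn f s μ) (hft : IntegrableOn f t μ)
    (hf_nonneg : ∀ x ∈ s \ t, 0 ≤ f x) (hf_nonpos : ∀ x ∈ t \ s, f x ≤ 0) :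
    ∫ x in symmDiff s t, |f x| ∂μ = ∫ x in s, f x ∂μ - ∫ x in t, f x ∂μ := by
  have h_st : ∫ x in s \ t, |f x| ∂μ = ∫ x in s, f x ∂μ - ∫ x in s ∩ t, f x ∂μ := by
    rw [setIntegral_congr_fun (hs.diff ht) fun x hx => abs_of_nonneg (hf_nonneg x hx),
      ← sdiff_self_inter, setIntegral_sdiff (hs.inter ht) hfs inter_subset_left]
  have h_ts : ∫ x in t \ s, |f x| ∂μ = ∫ x in s ∩ t, f x ∂μ - ∫ x in t, f x ∂μ := by
    rw [setIntegral_congr_fun (ht.diff hs) fun x hx => abs_of_nonpos (hf_nonpos x hx),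
      integral_neg, ← sdiff_inter_self_eq_sdiff, setIntegral_sdiff (hs.inter ht) hft
      inter_subset_right]
    ring
  rw [Set.symmDiff_def, setIntegral_union disjoint_sdiff_sdiff (ht.diff hs)
    (hfs.mono_set sdiff_subset).abs (hft.mono_set sdiff_subset).abs, h_st, h_ts]
  ring

theorem mul_norm_sub_inv_smul_sq {E : Type*} [NormedAddCommGroup E] [InnerProductSpace ℝ E]
    {m : ℝ} {M : E} (hM : m = 0 → M = 0) (x : E) :
    m * ‖x - m⁻¹ • M‖ ^ 2 = m * ‖x‖ ^ 2 - 2 * ⟪x, M⟫ + ‖M‖ ^ 2 / m := by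
  rcases eq_or_ne m 0 with rfl | hm
  · simp [hM rfl]
  rw [norm_sub_sq_real, real_inner_smul_right, norm_smul, norm_inv, Real.norm_eq_abs, mul_pow,
    inv_pow, sq_abs]
  field_simp

section Ball

variable {E F : Type*} [NormedAddCommGroup E] [MeasurableSpace E] [BorelSpace E]
  [NormedAddCommGroup F] [NormedSpace ℝ F]

theorem setIntegral_ball_comp_sub (μ : Measure E) [μ.IsAddRightInvariant] (g : E → F)
    (x₀ : E) (r : ℝ) : ∫ x in ball x₀ r, g (x - x₀) ∂μ = ∫ x in ball 0 r, g x ∂μ := by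
  have h_pre : (fun x => x - x₀) ⁻¹' ball 0 r = ball x₀ r := by
    ext x
    simp [dist_eq_norm]
  rw [← h_pre, (measurePreserving_sub_right μ x₀).setIntegral_preimage_emb
    (measurableEmbedding_subRight x₀)]

theorem setIntegral_ball_zero_norm_sq [NormedSpace ℝ E] [FiniteDimensional ℝ E] [Nontrivial E]
    (μ : Measure E) [μ.IsAddHaarMeasure] {r : ℝ} (hr : 0 ≤ r) :
    ∫ x in ball (0 : E) r, ‖x‖ ^ 2 ∂μ =
      finrank ℝ E / (finrank ℝ E + 2) * r ^ (finrank ℝ E + 2) * μ.real (ball 0 1) := by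
  have h_ind : (ball (0 : E) r).indicator (fun x => ‖x‖ ^ 2) =
      fun x => (Iio r).indicator (· ^ 2) ‖x‖ := by
    ext x
    simp [indicator]
  rw [← integral_indicator measurableSet_ball, h_ind, integral_fun_norm_addHaar μ]
  obtain ⟨n, hn⟩ : ∃ n, finrank ℝ E = n + 1 := Nat.exists_eq_succ_of_ne_zero finrank_pos.ne'
  have h_radial : ∀ y : ℝ, y ^ (finrank ℝ E - 1) • (Iio r).indicator (· ^ 2) y =
      (Iio r).indicator (fun y => y ^ (n + 2)) y := by
    intro y
    by_cases hy : y ∈ Iio r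
    · rw [indicator_of_mem hy, indicator_of_mem hy, hn, add_tsub_cancel_right, smul_eq_mul,
        ← pow_add]
    · simp [hy]
  simp_rw [h_radial]
  rw [setIntegral_indicator measurableSet_Iio, Ioi_inter_Iio, ← integral_Ioc_eq_integral_Ioo,
    ← intervalIntegral.integral_of_le hr, integral_pow, hn, zero_pow (by omega), sub_zero, nsmul_eq_mul, smul_eq_mul]
  push_cast
  field_simp
  ring

end Ball

theorem measureReal_ball_plane (x : Plane) {r : ℝ} (hr : 0 ≤ r) :
    volume.real (ball x r) = Real.pi * r ^ 2 := by
  rw [measureReal_def, EuclideanSpace.volume_ball_fin_two, ENNReal.toReal_mul, ENNReal.toReal_pow,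
    ENNReal.toReal_ofReal hr, ENNReal.toReal_ofReal Real.pi_nonneg, mul_comm]

theorem setIntegral_ball_norm_sub_sq (x₀ : Plane) {r : ℝ} (hr : 0 ≤ r) :
    ∫ x in ball x₀ r, ‖x - x₀‖ ^ 2 = Real.pi * r ^ 4 / 2 := by
  rw [setIntegral_ball_comp_sub volume (‖·‖ ^ 2), setIntegral_ball_zero_norm_sq volume hr,
    finrank_euclideanSpace_fin, measureReal_ball_plane 0 zero_le_one]
  push_cast
  ring

section Plane

variable {A : Set Plane}

theorem setIntegral_norm_sub_sq (hA : Bornology.IsBounded A) (x₀ : Plane) :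
    ∫ x in A, ‖x - x₀‖ ^ 2 = angMom A - 2 * ⟪x₀, mom A⟫ + mass A * ‖x₀‖ ^ 2 := by
  have h_id : IntegrableOn (fun x : Plane => x) A := continuous_id.integrableOn_of_isBounded hA
  have h_sq : IntegrableOn (fun x : Plane => ‖x‖ ^ 2) A :=
    (continuous_norm.pow 2).integrableOn_of_isBounded hA
  have h_inner : IntegrableOn (fun x : Plane => 2 * ⟪x₀, x⟫) A :=
    (by fun_prop : Continuous fun x : Plane => 2 * ⟪x₀, x⟫).integrableOn_of_isBounded hA
  have h_quad : IntegrableOn (fun x : Plane => ‖x‖ ^ 2 - 2 * ⟪x₀, x⟫) A := h_sq.sub h_inner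
  calc ∫ x in A, ‖x - x₀‖ ^ 2 = ∫ x in A, (‖x‖ ^ 2 - 2 * ⟪x₀, x⟫ + ‖x₀‖ ^ 2) := by
        simp_rw [norm_sub_sq_real, real_inner_comm x₀]
    _ = angMom A - 2 * ⟪x₀, mom A⟫ + mass A * ‖x₀‖ ^ 2 := by
        rw [integral_add h_quad (integrableOn_const hA.measure_lt_top.ne),
          integral_sub h_sq h_inner, integral_const_mul, integral_inner h_id, setIntegral_const,
          smul_eq_mul, measureReal_def, angMom, mom, mass]

theorem mom_eq_zero_of_mass_eq_zero (hA : Bornology.IsBounded A) (h : mass A = 0) :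
    mom A = 0 := by
  have h_null : volume A = 0 :=
    (ENNReal.toReal_eq_zero_iff _).mp h |>.resolve_right hA.measure_lt_top.ne
  rw [mom, Measure.restrict_eq_zero.mpr h_null, integral_zero_measure]

theorem Qfun_eq (hA : MeasurableSet A) (hAb : Bornology.IsBounded A) (x₀ : Plane) {r : ℝ}
    (hr : 0 ≤ r) :
    Qfun A x₀ r = angMom A - 2 * ⟪x₀, mom A⟫ + mass A * ‖x₀‖ ^ 2 - mass A * r ^ 2
      + Real.pi * r ^ 4 / 2 := by
  have hf : Continuous fun x : Plane => ‖x - x₀‖ ^ 2 - r ^ 2 := by fun_prop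
  have h_sq : Continuous fun x : Plane => ‖x - x₀‖ ^ 2 := by fun_prop
  rw [Qfun, setIntegral_symmDiff_abs_eq_sub hA measurableSet_ball
    (hf.integrableOn_of_isBounded hAb) (hf.integrableOn_of_isBounded isBounded_ball)]
  · rw [integral_sub (h_sq.integrableOn_of_isBounded hAb)
      (integrableOn_const hAb.measure_lt_top.ne), integral_sub
      (h_sq.integrableOn_of_isBounded isBounded_ball) (integrableOn_const measure_ball_lt_top.ne),
      setIntegral_norm_sub_sq hAb, setIntegral_ball_norm_sub_sq x₀ hr, setIntegral_const,
      setIntegral_const, measureReal_ball_plane x₀ hr, smul_eq_mul, smul_eq_mul, mass,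
      measureReal_def]
    ring
  · intro x hx
    have : r ≤ ‖x - x₀‖ := by simpa [dist_eq_norm] using hx.2
    nlinarith
  · intro x hx
    have : ‖x - x₀‖ < r := by simpa [dist_eq_norm] using hx.1
    nlinarith [norm_nonneg (x - x₀)]

theorem Qfun_sub_eq (hA : MeasurableSet A) (hAb : Bornology.IsBounded A)
    (x₀ : Plane) {r : ℝ} (hr : 0 ≤ r) :
    Qfun A x₀ r - (angMom A - mass A ^ 2 / (2 * Real.pi) - ‖mom A‖ ^ 2 / mass A) =
      mass A * ‖x₀ - (mass A)⁻¹ • mom A‖ ^ 2 + Real.pi / 2 * (r ^ 2 - mass A / Real.pi) ^ 2 := by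
  rw [Qfun_eq hA hAb x₀ hr, mul_norm_sub_inv_smul_sq (mom_eq_zero_of_mass_eq_zero hAb) x₀]
  field_simp
  ring

end Plane

theorem stmt5_general (A : Set Plane) (hA : IsOpen A) (hAb : Bornology.IsBounded A) :
    ∀ (x₀ : Plane) (r : ℝ), 0 < r →
      (angMom A - (mass A) ^ 2 / (2 * Real.pi) - ‖mom A‖ ^ 2 / mass A ≤ Qfun A x₀ r ∧
        (Qfun A x₀ r = angMom A - (mass A) ^ 2 / (2 * Real.pi) - ‖mom A‖ ^ 2 / mass A ↔
          Real.pi * r ^ 2 = mass A ∧ x₀ = (mass A)⁻¹ • mom A)) := by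
  intro x₀ r hr
  have h_gap := Qfun_sub_eq hA.measurableSet hAb x₀ hr.le
  have hm : 0 ≤ mass A := ENNReal.toReal_nonneg
  have hπ := Real.pi_pos
  have h_center : 0 ≤ mass A * ‖x₀ - (mass A)⁻¹ • mom A‖ ^ 2 := by positivity
  have h_radius : 0 ≤ Real.pi / 2 * (r ^ 2 - mass A / Real.pi) ^ 2 := by positivity
  refine ⟨by linarith, ?_⟩
  rw [← sub_eq_zero, h_gap, add_eq_zero_iff_of_nonneg h_center h_radius]
  constructor
  · rintro ⟨h_x₀, h_r⟩
    have h_mass : Real.pi * r ^ 2 = mass A := by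
      have : r ^ 2 - mass A / Real.pi = 0 := by simpa [hπ.ne'] using h_r
      field_simp at this
      linarith
    have h_pos : 0 < mass A := h_mass ▸ by positivity
    exact ⟨h_mass, by simpa [h_pos.ne', sub_eq_zero] using h_x₀⟩
  · rintro ⟨h_mass, rfl⟩
    exact ⟨by simp, by simp [← h_mass, hπ.ne']⟩

/-- For a nonempty bounded open set `A ⊆ ℝ²`, every `x₀` and `r > 0`:
`Q(A; B_r(x₀)) ≥ i(A) − |A|²/(2π) − |M(A)|²/|A|`, with equality iff `πr² = |A|`
and `x₀ = M(A)/|A|`.  In particular, among all balls, `Q(A; B_r(x₀))` is minimized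
by the ball having the same mass and the same center of mass as `A`. -/
theorem stmt5 (A : Set Plane) (hA : IsOpen A) (hAb : Bornology.IsBounded A)
    (hAne : A.Nonempty) :
    ∀ (x₀ : Plane) (r : ℝ), 0 < r →
      (angMom A - (mass A) ^ 2 / (2 * Real.pi) - ‖mom A‖ ^ 2 / mass A ≤ Qfun A x₀ r ∧
        (Qfun A x₀ r = angMom A - (mass A) ^ 2 / (2 * Real.pi) - ‖mom A‖ ^ 2 / mass A ↔
          Real.pi * r ^ 2 = mass A ∧ x₀ = (mass A)⁻¹ • mom A)) :=
  stmt5_general A hA hAb
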